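/- Let γ ∈ ℝ, k > 0, and set s = (√(γ² + 4k⁴) + γ)/2. Let m be a real number with m ≥ 1 and m ≥ s, set r = √(s + m²), and let a, t be real numbers with a > 8√2·m and |t| ≤ a. Then (a² + 2rt)·(a² + 2rt + 2s − γ) ≥ a⁴/2. -/
import Mathlib


/-- High-frequency lower bound for the real part of the symbol: with
`s = (√(γ² + 4k⁴) + γ)/2`, `m ≥ 1`, `m ≥ s`, `r = √(s + m²)`, `a > 8√2·m`, `|t| ≤ a`,
one has `(a² + 2rt)(a² + 2rt + 2s − γ) ≥ a⁴/2`. -/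
theorem stmt5 (γ k s m r a t : ℝ) (hk : 0 < k)
    (hs : s = (Real.sqrt (γ ^ 2 + 4 * k ^ 4) + γ) / 2)
    (hm1 : 1 ≤ m) (hms : s ≤ m)
    (hr : r = Real.sqrt (s + m ^ 2))
    (ha : 8 * Real.sqrt 2 * m < a) (ht : |t| ≤ a) :
    a ^ 4 / 2 ≤ (a ^ 2 + 2 * r * t) * (a ^ 2 + 2 * r * t + 2 * s - γ) := by
  set c := Real.sqrt 2 with hc
  have hc0 : 0 < c := Real.sqrt_pos.mpr (by norm_num)
  have ha0 : 0 < a := lt_trans (by positivity) ha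
  have hsqnn : 0 ≤ Real.sqrt (γ ^ 2 + 4 * k ^ 4) := Real.sqrt_nonneg _
  have h2s : 2 * s - γ = Real.sqrt (γ ^ 2 + 4 * k ^ 4) := by rw [hs]; ring
  have hd : 0 ≤ 2 * s - γ := h2s ▸ hsqnn
  have hk4 : 0 < k ^ 4 := by positivity
  have hs0 : 0 ≤ s := by
    rw [hs]
    nlinarith [Real.sq_sqrt (show (0:ℝ) ≤ γ ^ 2 + 4 * k ^ 4 by positivity), hsqnn, hk4]
  have hr0 : 0 ≤ r := hr ▸ Real.sqrt_nonneg _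
  have hrle : r ≤ c * m := by
    rw [hr, hc]
    have h1 : Real.sqrt (s + m ^ 2) ≤ Real.sqrt (2 * m ^ 2) := by
      apply Real.sqrt_le_sqrt; nlinarith
    have h2 : Real.sqrt (2 * m ^ 2) = Real.sqrt 2 * m := by
      rw [Real.sqrt_mul (by norm_num), Real.sqrt_sq (by linarith)]
    linarith [h1, h2.le, h2.ge]
  have h1 : -(2 * r * a) ≤ 2 * r * t := by nlinarith [neg_abs_le t, hr0, ht]
  have h2 : 2 * r * a ≤ a ^ 2 / 4 := by nlinarith [mul_pos hc0 (show (0:ℝ) < m by linarith)]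
  have hx : 3 / 4 * a ^ 2 ≤ a ^ 2 + 2 * r * t := by linarith
  nlinarith [sq_nonneg a, mul_nonneg (by nlinarith [sq_nonneg a] : (0:ℝ) ≤ a ^ 2 + 2 * r * t) hd,
    mul_le_mul hx hx (by positivity) (by linarith [sq_nonneg a])]
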